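/- For every (u,v) ∈ ℝ³ × ℝ³ with Q(u,v) < 1, one has F(G(u,v)) = (u,v). Combined with G ∘ F = id, the forward constitutive map F is a bijection from ℝ³ × ℝ³ onto the open set D = {(u,v) : Q(u,v) < 1}, with inverse G. -/

import Mathlib

/-- The quadratic form `Q(u,v)`. -/
def Q (α β ζ η ι : ℝ) (u v : Fin 3 → ℝ) : ℝ :=
  α ^ 2 * (u 0 ^ 2 + u 1 ^ 2) + β ^ 2 * u 2 ^ 2 + ζ ^ 2 * (v 0 ^ 2 + v 1 ^ 2)
    + η ^ 2 * (v 2 - 1) ^ 2 + 2 * ι * u 2 * (v 2 - 1)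

/-- The complementary quadratic form `Q*(m,n)`. -/
noncomputable def Qstar (α β ζ η ι : ℝ) (m n : Fin 3 → ℝ) : ℝ :=
  (m 0 ^ 2 + m 1 ^ 2) / α ^ 2 + (n 0 ^ 2 + n 1 ^ 2) / ζ ^ 2
    + (η ^ 2 * m 2 ^ 2 + β ^ 2 * n 2 ^ 2 - 2 * ι * m 2 * n 2) / (β ^ 2 * η ^ 2 - ι ^ 2)

/-- The forward constitutive map `F : (m,n) ↦ (u,v)`, with
`λ = (γ^p + Q*(m,n)^{p/2})^{−1/p}`. -/
noncomputable def Fmap (p α β γ ζ η ι : ℝ) (m n : Fin 3 → ℝ) :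
    (Fin 3 → ℝ) × (Fin 3 → ℝ) :=
  let lam : ℝ := (γ ^ p + (Qstar α β ζ η ι m n) ^ (p / 2)) ^ (-(1 / p))
  (![lam * m 0 / α ^ 2, lam * m 1 / α ^ 2,
      lam * (η ^ 2 * m 2 - ι * n 2) / (β ^ 2 * η ^ 2 - ι ^ 2)],
   ![lam * n 0 / ζ ^ 2, lam * n 1 / ζ ^ 2,
      1 + lam * (β ^ 2 * n 2 - ι * m 2) / (β ^ 2 * η ^ 2 - ι ^ 2)])

/-- The backward constitutive map `G : (u,v) ↦ (m,n)`, with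
`μ = γ(1 − Q(u,v)^{p/2})^{−1/p}`. -/
noncomputable def Gmap (p α β γ ζ η ι : ℝ) (u v : Fin 3 → ℝ) :
    (Fin 3 → ℝ) × (Fin 3 → ℝ) :=
  let mu : ℝ := γ * (1 - (Q α β ζ η ι u v) ^ (p / 2)) ^ (-(1 / p))
  (![mu * α ^ 2 * u 0, mu * α ^ 2 * u 1, mu * (β ^ 2 * u 2 + ι * (v 2 - 1))],
   ![mu * ζ ^ 2 * v 0, mu * ζ ^ 2 * v 1, mu * (ι * u 2 + η ^ 2 * (v 2 - 1))])

/-!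
With `w = (u, v - e₃)`, `G(u,v) = μ • A w` and `F(z) = λ • A⁻¹ z + e₃` for the symmetric positive
definite matrix `A` read off from `G`, while `Q(u,v) = ⟪A w, w⟫` and `Q*(z) = ⟪A⁻¹ z, z⟫`. Hence
`Q*(G(u,v)) = μ² Q(u,v)` and `Q(F(m,n)) = λ² Q*(m,n)`, and both inverse identities reduce to the
scalar facts `λ(μ(q)² q) = μ(q)⁻¹` and `μ(λ(r)² r) = λ(r)⁻¹`. They hold because
`γ^p + (μ² q)^{p/2} = μ^p` and `1 - (λ² r)^{p/2} = (λ γ)^p`; the second also gives `λ(r)² r < 1`.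
-/

lemma rpow_rpow_neg_one_div {x : ℝ} (p : ℝ) (hx : 0 ≤ x) (hp : p ≠ 0) :
    (x ^ p) ^ (-(1 / p)) = x⁻¹ := by
  rw [← Real.rpow_mul hx, show p * -(1 / p) = -1 by field_simp, Real.rpow_neg_one]

lemma rpow_neg_one_div_rpow {x : ℝ} (p : ℝ) (hx : 0 ≤ x) (hp : p ≠ 0) :
    (x ^ (-(1 / p))) ^ p = x⁻¹ := by
  rw [← Real.rpow_mul hx, show -(1 / p) * p = -1 by field_simp, Real.rpow_neg_one]

lemma sq_mul_rpow_half {c q : ℝ} (p : ℝ) (hc : 0 ≤ c) (hq : 0 ≤ q) :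
    (c ^ 2 * q) ^ (p / 2) = c ^ p * q ^ (p / 2) := by
  rw [Real.mul_rpow (by positivity) hq, ← Real.rpow_natCast, ← Real.rpow_mul hc]
  norm_num [mul_div_cancel₀]

noncomputable def forwardScale (p γ r : ℝ) : ℝ := (γ ^ p + r ^ (p / 2)) ^ (-(1 / p))

noncomputable def backwardScale (p γ q : ℝ) : ℝ := γ * (1 - q ^ (p / 2)) ^ (-(1 / p))

section Scales

variable {p γ : ℝ}

lemma forwardScale_pos (hγ : 0 < γ) {r : ℝ} (hr : 0 ≤ r) : 0 < forwardScale p γ r := by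
  unfold forwardScale; positivity

lemma backwardScale_pos (hp : 0 < p) (hγ : 0 < γ) {q : ℝ} (hq : 0 ≤ q) (hq1 : q < 1) :
    0 < backwardScale p γ q := by
  have : q ^ (p / 2) < 1 := Real.rpow_lt_one hq hq1 (by positivity)
  unfold backwardScale
  have : 0 < 1 - q ^ (p / 2) := by linarith
  positivity

lemma forwardScale_sq_mul_backwardScale (hp : 0 < p) (hγ : 0 < γ) {q : ℝ} (hq : 0 ≤ q)
    (hq1 : q < 1) :
    forwardScale p γ (backwardScale p γ q ^ 2 * q) = (backwardScale p γ q)⁻¹ := by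
  set μ := backwardScale p γ q
  have hμ : 0 < μ := backwardScale_pos hp hγ hq hq1
  have hs : 0 < 1 - q ^ (p / 2) := by
    linarith [Real.rpow_lt_one hq hq1 (by positivity : 0 < p / 2)]
  have hμp : μ ^ p = γ ^ p * (1 - q ^ (p / 2))⁻¹ := by
    rw [show μ = γ * (1 - q ^ (p / 2)) ^ (-(1 / p)) from rfl, Real.mul_rpow hγ.le (by positivity),
      rpow_neg_one_div_rpow p hs.le hp.ne']
  have hsum : γ ^ p + (μ ^ 2 * q) ^ (p / 2) = μ ^ p := by
    rw [sq_mul_rpow_half p hμ.le hq, hμp]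
    field_simp
    ring
  rw [forwardScale, hsum, rpow_rpow_neg_one_div p hμ.le hp.ne']

lemma one_sub_rpow_half_sq_forwardScale_mul (hp : 0 < p) (hγ : 0 < γ) {r : ℝ} (hr : 0 ≤ r) :
    1 - (forwardScale p γ r ^ 2 * r) ^ (p / 2) = (forwardScale p γ r * γ) ^ p := by
  set l := forwardScale p γ r
  have hl : 0 < l := forwardScale_pos hγ hr
  have ht : 0 < γ ^ p + r ^ (p / 2) := by positivity
  have hlp : l ^ p = (γ ^ p + r ^ (p / 2))⁻¹ := rpow_neg_one_div_rpow p ht.le hp.ne'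
  rw [sq_mul_rpow_half p hl.le hr, Real.mul_rpow hl.le hγ.le, hlp]
  field_simp
  ring

lemma sq_forwardScale_mul_lt_one (hp : 0 < p) (hγ : 0 < γ) {r : ℝ} (hr : 0 ≤ r) :
    forwardScale p γ r ^ 2 * r < 1 := by
  have hpos : 0 < (forwardScale p γ r * γ) ^ p := by
    have := forwardScale_pos (p := p) hγ hr; positivity
  have := one_sub_rpow_half_sq_forwardScale_mul hp hγ hr
  have hlt : (forwardScale p γ r ^ 2 * r) ^ (p / 2) < 1 := by linarith
  exact (Real.rpow_lt_one_iff' (by positivity) (by positivity)).mp hlt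

lemma backwardScale_sq_forwardScale_mul (hp : 0 < p) (hγ : 0 < γ) {r : ℝ} (hr : 0 ≤ r) :
    backwardScale p γ (forwardScale p γ r ^ 2 * r) = (forwardScale p γ r)⁻¹ := by
  have hl := forwardScale_pos (p := p) hγ hr
  rw [backwardScale, one_sub_rpow_half_sq_forwardScale_mul hp hγ hr,
    rpow_rpow_neg_one_div p (by positivity) hp.ne']
  field_simp

end Scales

noncomputable def FmapWith (α β ζ η ι c : ℝ) (m n : Fin 3 → ℝ) : (Fin 3 → ℝ) × (Fin 3 → ℝ) :=
  (![c * m 0 / α ^ 2, c * m 1 / α ^ 2, c * (η ^ 2 * m 2 - ι * n 2) / (β ^ 2 * η ^ 2 - ι ^ 2)],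
   ![c * n 0 / ζ ^ 2, c * n 1 / ζ ^ 2, 1 + c * (β ^ 2 * n 2 - ι * m 2) / (β ^ 2 * η ^ 2 - ι ^ 2)])

def GmapWith (α β ζ η ι c : ℝ) (u v : Fin 3 → ℝ) : (Fin 3 → ℝ) × (Fin 3 → ℝ) :=
  (![c * α ^ 2 * u 0, c * α ^ 2 * u 1, c * (β ^ 2 * u 2 + ι * (v 2 - 1))],
   ![c * ζ ^ 2 * v 0, c * ζ ^ 2 * v 1, c * (ι * u 2 + η ^ 2 * (v 2 - 1))])

lemma Fmap_eq_FmapWith (p α β γ ζ η ι : ℝ) (m n : Fin 3 → ℝ) :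
    Fmap p α β γ ζ η ι m n = FmapWith α β ζ η ι (forwardScale p γ (Qstar α β ζ η ι m n)) m n :=
  rfl

lemma Gmap_eq_GmapWith (p α β γ ζ η ι : ℝ) (u v : Fin 3 → ℝ) :
    Gmap p α β γ ζ η ι u v = GmapWith α β ζ η ι (backwardScale p γ (Q α β ζ η ι u v)) u v :=
  rfl

section Quadratic

variable {α β ζ η ι : ℝ}

lemma Q_nonneg (hD : 0 < β ^ 2 * η ^ 2 - ι ^ 2) (u v : Fin 3 → ℝ) : 0 ≤ Q α β ζ η ι u v := by
  have hβ : 0 < β ^ 2 := by nlinarith [sq_nonneg ι, sq_nonneg (β * η)]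
  -- `β²` times it is `(β² u₂ + ι (v₂ - 1))² + (β²η² - ι²)(v₂ - 1)²`
  have h3 : 0 ≤ β ^ 2 * u 2 ^ 2 + η ^ 2 * (v 2 - 1) ^ 2 + 2 * ι * u 2 * (v 2 - 1) := by
    refine nonneg_of_mul_nonneg_right ?_ hβ
    nlinarith [sq_nonneg (β ^ 2 * u 2 + ι * (v 2 - 1)), mul_nonneg hD.le (sq_nonneg (v 2 - 1))]
  unfold Q
  nlinarith [mul_nonneg (sq_nonneg α) (add_nonneg (sq_nonneg (u 0)) (sq_nonneg (u 1))),
    mul_nonneg (sq_nonneg ζ) (add_nonneg (sq_nonneg (v 0)) (sq_nonneg (v 1)))]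

lemma Qstar_nonneg (hD : 0 < β ^ 2 * η ^ 2 - ι ^ 2) (m n : Fin 3 → ℝ) :
    0 ≤ Qstar α β ζ η ι m n := by
  have hη : 0 < η ^ 2 := by nlinarith [sq_nonneg ι, sq_nonneg (β * η)]
  have h3 : 0 ≤ η ^ 2 * m 2 ^ 2 + β ^ 2 * n 2 ^ 2 - 2 * ι * m 2 * n 2 := by
    refine nonneg_of_mul_nonneg_right ?_ hη
    nlinarith [sq_nonneg (η ^ 2 * m 2 - ι * n 2), mul_nonneg hD.le (sq_nonneg (n 2))]
  unfold Qstar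
  positivity

lemma Qstar_GmapWith (hD : β ^ 2 * η ^ 2 - ι ^ 2 ≠ 0) (c : ℝ) (u v : Fin 3 → ℝ) :
    Qstar α β ζ η ι (GmapWith α β ζ η ι c u v).1 (GmapWith α β ζ η ι c u v).2
      = c ^ 2 * Q α β ζ η ι u v := by
  simp only [GmapWith, Qstar, Q, Matrix.cons_val]
  generalize hDdef : β ^ 2 * η ^ 2 - ι ^ 2 = D at hD ⊢
  field_simp
  subst hDdef
  ring

lemma Q_FmapWith (hD : β ^ 2 * η ^ 2 - ι ^ 2 ≠ 0) (c : ℝ) (m n : Fin 3 → ℝ) :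
    Q α β ζ η ι (FmapWith α β ζ η ι c m n).1 (FmapWith α β ζ η ι c m n).2
      = c ^ 2 * Qstar α β ζ η ι m n := by
  simp only [FmapWith, Qstar, Q, Matrix.cons_val]
  generalize hDdef : β ^ 2 * η ^ 2 - ι ^ 2 = D at hD ⊢
  field_simp
  subst hDdef
  ring

lemma FmapWith_inv_GmapWith (hα : α ≠ 0) (hζ : ζ ≠ 0) (hD : β ^ 2 * η ^ 2 - ι ^ 2 ≠ 0)
    {c : ℝ} (hc : c ≠ 0) (u v : Fin 3 → ℝ) :
    FmapWith α β ζ η ι c⁻¹ (GmapWith α β ζ η ι c u v).1 (GmapWith α β ζ η ι c u v).2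
      = (u, v) := by
  simp only [FmapWith, GmapWith, Prod.mk.injEq]
  generalize hDdef : β ^ 2 * η ^ 2 - ι ^ 2 = D at hD ⊢
  constructor <;> ext i <;> fin_cases i <;> simp <;> field_simp <;> subst hDdef <;> ring

lemma GmapWith_inv_FmapWith (hα : α ≠ 0) (hζ : ζ ≠ 0) (hD : β ^ 2 * η ^ 2 - ι ^ 2 ≠ 0)
    {c : ℝ} (hc : c ≠ 0) (m n : Fin 3 → ℝ) :
    GmapWith α β ζ η ι c⁻¹ (FmapWith α β ζ η ι c m n).1 (FmapWith α β ζ η ι c m n).2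
      = (m, n) := by
  simp only [FmapWith, GmapWith, Prod.mk.injEq]
  generalize hDdef : β ^ 2 * η ^ 2 - ι ^ 2 = D at hD ⊢
  constructor <;> ext i <;> fin_cases i <;> simp <;> field_simp <;> subst hDdef <;> ring

end Quadratic

section Inverse

variable {p α β γ ζ η ι : ℝ}

lemma Fmap_Gmap (hp : 0 < p) (hγ : 0 < γ) (hα : α ≠ 0) (hζ : ζ ≠ 0)
    (hD : 0 < β ^ 2 * η ^ 2 - ι ^ 2) {u v : Fin 3 → ℝ} (huv : Q α β ζ η ι u v < 1) :
    Fmap p α β γ ζ η ι (Gmap p α β γ ζ η ι u v).1 (Gmap p α β γ ζ η ι u v).2 = (u, v) := by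
  have hq : 0 ≤ Q α β ζ η ι u v := Q_nonneg hD u v
  rw [Gmap_eq_GmapWith, Fmap_eq_FmapWith, Qstar_GmapWith hD.ne',
    forwardScale_sq_mul_backwardScale hp hγ hq huv,
    FmapWith_inv_GmapWith hα hζ hD.ne' (backwardScale_pos hp hγ hq huv).ne']

lemma Q_Fmap_lt_one (hp : 0 < p) (hγ : 0 < γ) (hD : 0 < β ^ 2 * η ^ 2 - ι ^ 2)
    (m n : Fin 3 → ℝ) :
    Q α β ζ η ι (Fmap p α β γ ζ η ι m n).1 (Fmap p α β γ ζ η ι m n).2 < 1 := by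
  rw [Fmap_eq_FmapWith, Q_FmapWith hD.ne']
  exact sq_forwardScale_mul_lt_one hp hγ (Qstar_nonneg hD m n)

lemma Gmap_Fmap (hp : 0 < p) (hγ : 0 < γ) (hα : α ≠ 0) (hζ : ζ ≠ 0)
    (hD : 0 < β ^ 2 * η ^ 2 - ι ^ 2) (m n : Fin 3 → ℝ) :
    Gmap p α β γ ζ η ι (Fmap p α β γ ζ η ι m n).1 (Fmap p α β γ ζ η ι m n).2 = (m, n) := by
  have hr : 0 ≤ Qstar α β ζ η ι m n := Qstar_nonneg hD m n
  rw [Fmap_eq_FmapWith, Gmap_eq_GmapWith, Q_FmapWith hD.ne',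
    backwardScale_sq_forwardScale_mul hp hγ hr,
    GmapWith_inv_FmapWith hα hζ hD.ne' (forwardScale_pos hγ hr).ne']

end Inverse

theorem Fmap_comp_Gmap_and_bijOn_general (p α β γ ζ η ι : ℝ) (hp : 0 < p) (hα : 0 < α)
    (hγ : 0 < γ) (hζ : 0 < ζ)
    (hβηι : 0 < β ^ 2 * η ^ 2 - ι ^ 2) :
    (∀ u v : Fin 3 → ℝ, Q α β ζ η ι u v < 1 →
      Fmap p α β γ ζ η ι (Gmap p α β γ ζ η ι u v).1 (Gmap p α β γ ζ η ι u v).2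
        = (u, v)) ∧
    Set.BijOn (fun x : (Fin 3 → ℝ) × (Fin 3 → ℝ) => Fmap p α β γ ζ η ι x.1 x.2)
      Set.univ {x : (Fin 3 → ℝ) × (Fin 3 → ℝ) | Q α β ζ η ι x.1 x.2 < 1} := by
  refine ⟨fun _ _ huv => Fmap_Gmap hp hγ hα.ne' hζ.ne' hβηι huv,
    Set.InvOn.bijOn (f' := fun y => Gmap p α β γ ζ η ι y.1 y.2) ⟨?_, ?_⟩ ?_ ?_⟩
  · exact fun x _ => Gmap_Fmap hp hγ hα.ne' hζ.ne' hβηι x.1 x.2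
  · exact fun _ hy => Fmap_Gmap hp hγ hα.ne' hζ.ne' hβηι hy
  · exact fun x _ => Q_Fmap_lt_one hp hγ hβηι x.1 x.2
  · exact fun _ _ => Set.mem_univ _

/-- for every `(u,v)` with `Q(u,v) < 1`, `F(G(u,v)) = (u,v)`; combined with
`G ∘ F = id`, the map `F` is a bijection from `ℝ³ × ℝ³` onto the open set
`D = {(u,v) : Q(u,v) < 1}` (with inverse `G`). -/
theorem Fmap_comp_Gmap_and_bijOn (p α β γ ζ η ι : ℝ) (hp : 0 < p) (hα : 0 < α)
    (hβ : 0 < β) (hγ : 0 < γ) (hζ : 0 < ζ) (hη : 0 < η)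
    (hβηι : 0 < β ^ 2 * η ^ 2 - ι ^ 2) :
    (∀ u v : Fin 3 → ℝ, Q α β ζ η ι u v < 1 →
      Fmap p α β γ ζ η ι (Gmap p α β γ ζ η ι u v).1 (Gmap p α β γ ζ η ι u v).2
        = (u, v)) ∧
    Set.BijOn (fun x : (Fin 3 → ℝ) × (Fin 3 → ℝ) => Fmap p α β γ ζ η ι x.1 x.2)
      Set.univ {x : (Fin 3 → ℝ) × (Fin 3 → ℝ) | Q α β ζ η ι x.1 x.2 < 1} :=
  Fmap_comp_Gmap_and_bijOn_general p α β γ ζ η ι hp hα hγ hζ hβηι
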